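/- arXiv:2103.04187 — 3 statements merged into one kernel-verified Lean document; each statement's English description precedes it below -/
import Mathlib

section
/- Strict triangularity with respect to homogeneity. Let D be one of the operators ∂₁, ∂₂, or z^γ̄·D^(𝐧) (multiplication by the monomial z^γ̄ composed with D^(𝐧)) where 𝐧 ∈ ℕ² is arbitrary (including 𝐧 = 0) and the multi-index γ̄ satisfies [γ̄] ≥ 0 and |γ̄| > |𝐧|. Then for all multi-indices γ′, β′: if the z^{β′}-coefficient of D(z^{γ′}) is nonzero, then |γ′| < |β′|. -/
open MvPolynomial

abbrev N2 : Type := {p : ℕ × ℕ // p ≠ (0, 0)}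
abbrev Idx : Type := ℕ ⊕ N2
abbrev MIdx : Type := Idx →₀ ℕ
abbrev PS : Type := MvPowerSeries Idx ℝ

noncomputable section

/-- the weight `|𝐧| = w₁ n₁ + w₂ n₂` of `𝐧 ∈ ℕ²`. -/
def wt (w₁ w₂ : ℝ) (n : ℕ × ℕ) : ℝ := w₁ * n.1 + w₂ * n.2

/-- `[γ] = Σ_k k γ(k) − Σ_{𝐧≠0} γ(𝐧)`. -/
def brk (γ : MIdx) : ℤ :=
  γ.sum fun i n =>
    match i with
    | Sum.inl k => (k : ℤ) * n
    | Sum.inr _ => -(n : ℤ)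

/-- `Σ_{𝐦≠0} |𝐦| γ(𝐦)`. -/
def wsum (w₁ w₂ : ℝ) (γ : MIdx) : ℝ :=
  γ.sum fun i n =>
    match i with
    | Sum.inl _ => 0
    | Sum.inr m => wt w₁ w₂ m.1 * n

/-- the homogeneity `|γ| = α([γ]+1) + Σ_{𝐧≠0}|𝐧|γ(𝐧)`. -/
def homdeg (α w₁ w₂ : ℝ) (γ : MIdx) : ℝ := α * ((brk γ : ℝ) + 1) + wsum w₁ w₂ γ

/-! ### operators on monomials (polynomial level) -/

/-- `D^(0) z^γ = Σ_k (k+1) γ(k) z^{γ - e_k + e_{k+1}}`. -/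
def D0mono (γ : MIdx) : MvPolynomial Idx ℝ :=
  γ.sum fun i n =>
    match i with
    | Sum.inl k =>
        (((k + 1) * n : ℕ) : ℝ) •
          monomial (γ - Finsupp.single (Sum.inl k) 1 + Finsupp.single (Sum.inl (k + 1)) 1) 1
    | Sum.inr _ => 0

/-- `D^(𝐧) z^γ = ∂_{z_𝐧} z^γ` for `𝐧 ≠ 0`. -/
def DNmono (m : N2) (γ : MIdx) : MvPolynomial Idx ℝ :=
  ((γ (Sum.inr m) : ℕ) : ℝ) • monomial (γ - Finsupp.single (Sum.inr m) 1) 1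

/-- `D^(𝐧) z^γ` for arbitrary `𝐧 ∈ ℕ²`. -/
def Dmono (n : ℕ × ℕ) (γ : MIdx) : MvPolynomial Idx ℝ :=
  if h : n = (0, 0) then D0mono γ else DNmono ⟨n, h⟩ γ

lemma add10_ne (n : ℕ × ℕ) : n + (1, 0) ≠ (0, 0) := by
  intro h
  exact Nat.succ_ne_zero n.1 (congrArg Prod.fst h)

lemma add01_ne (n : ℕ × ℕ) : n + (0, 1) ≠ (0, 0) := by
  intro h
  exact Nat.succ_ne_zero n.2 (congrArg Prod.snd h)

def v10 : N2 := ⟨(1, 0), by decide⟩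
def v01 : N2 := ⟨(0, 1), by decide⟩

/-- `∂₁ z^γ = z_{(1,0)} D^(0) z^γ + Σ_{𝐧≠0} (n₁+1) z_{𝐧+(1,0)} ∂_{z_𝐧} z^γ`. -/
def d1mono (γ : MIdx) : MvPolynomial Idx ℝ :=
  X (Sum.inr v10) * D0mono γ +
    γ.sum fun i n =>
      match i with
      | Sum.inl _ => 0
      | Sum.inr m =>
          (((m.1.1 + 1) * n : ℕ) : ℝ) •
            monomial
              (γ - Finsupp.single (Sum.inr m) 1 +
                Finsupp.single (Sum.inr ⟨m.1 + (1, 0), add10_ne m.1⟩) 1) 1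

/-- `∂₂ z^γ`. -/
def d2mono (γ : MIdx) : MvPolynomial Idx ℝ :=
  X (Sum.inr v01) * D0mono γ +
    γ.sum fun i n =>
      match i with
      | Sum.inl _ => 0
      | Sum.inr m =>
          (((m.1.2 + 1) * n : ℕ) : ℝ) •
            monomial
              (γ - Finsupp.single (Sum.inr m) 1 +
                Finsupp.single (Sum.inr ⟨m.1 + (0, 1), add01_ne m.1⟩) 1) 1

/-! ### operators on power series (coefficientwise) -/

/-- coefficient of `D^(0) f` at `β`. -/
def D0coeff (f : PS) (β : MIdx) : ℝ :=
  ∑ i ∈ β.support,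
    match i with
    | Sum.inl (k + 1) =>
        (((k + 1) * (β (Sum.inl k) + 1) : ℕ) : ℝ) *
          MvPowerSeries.coeff
            (β + Finsupp.single (Sum.inl k) 1 - Finsupp.single (Sum.inl (k + 1)) 1) f
    | _ => 0

/-- `D^(0)` on power series. -/
def D0series (f : PS) : PS := D0coeff f

/-- `D^(𝐧) = ∂_{z_𝐧}` on power series, `𝐧 ≠ 0`. -/
def DNseries (m : N2) (f : PS) : PS :=
  fun β => ((β (Sum.inr m) + 1 : ℕ) : ℝ) *
    MvPowerSeries.coeff (β + Finsupp.single (Sum.inr m) 1) f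

/-- `D^(𝐧)` on power series for arbitrary `𝐧 ∈ ℕ²`. -/
def Dseries (n : ℕ × ℕ) (f : PS) : PS :=
  if h : n = (0, 0) then D0series f else DNseries ⟨n, h⟩ f

/-- coefficient of `∂₁ f` at `β`. -/
def d1coeff (f : PS) (β : MIdx) : ℝ :=
  (if 1 ≤ β (Sum.inr v10) then D0coeff f (β - Finsupp.single (Sum.inr v10) 1) else 0) +
    ∑ i ∈ β.support,
      match i with
      | Sum.inl _ => 0
      | Sum.inr p =>
          if hp : ((p.1.1 - 1, p.1.2) : ℕ × ℕ) ≠ (0, 0) ∧ 1 ≤ p.1.1 then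
            (p.1.1 : ℝ) *
              ((((β - Finsupp.single (Sum.inr p) 1 : MIdx) (Sum.inr ⟨(p.1.1 - 1, p.1.2), hp.1⟩) : ℕ) + 1 : ℕ) : ℝ) *
              MvPowerSeries.coeff
                (β - Finsupp.single (Sum.inr p) 1 +
                  Finsupp.single (Sum.inr ⟨(p.1.1 - 1, p.1.2), hp.1⟩) 1) f
          else 0

/-- `∂₁` on power series. -/
def d1series (f : PS) : PS := d1coeff f

/-- coefficient of `∂₂ f` at `β`. -/
def d2coeff (f : PS) (β : MIdx) : ℝ :=
  (if 1 ≤ β (Sum.inr v01) then D0coeff f (β - Finsupp.single (Sum.inr v01) 1) else 0) +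
    ∑ i ∈ β.support,
      match i with
      | Sum.inl _ => 0
      | Sum.inr p =>
          if hp : ((p.1.1, p.1.2 - 1) : ℕ × ℕ) ≠ (0, 0) ∧ 1 ≤ p.1.2 then
            (p.1.2 : ℝ) *
              ((((β - Finsupp.single (Sum.inr p) 1 : MIdx) (Sum.inr ⟨(p.1.1, p.1.2 - 1), hp.1⟩) : ℕ) + 1 : ℕ) : ℝ) *
              MvPowerSeries.coeff
                (β - Finsupp.single (Sum.inr p) 1 +
                  Finsupp.single (Sum.inr ⟨(p.1.1, p.1.2 - 1), hp.1⟩) 1) f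
          else 0

/-- `∂₂` on power series. -/
def d2series (f : PS) : PS := d2coeff f

/-- the operator `z^γ·D^(𝐧)` on power series. -/
def opOf (γ : MIdx) (n : ℕ × ℕ) (f : PS) : PS :=
  MvPowerSeries.monomial γ 1 * Dseries n f

/-- the dual model space `T̃*`. -/
def Ttilde : Set PS := {f | ∀ γ : MIdx, MvPowerSeries.coeff γ f ≠ 0 → 0 ≤ brk γ}

/-- the dual model space `T*`. -/
def Tstar : Set PS :=
  {f | ∀ γ : MIdx, MvPowerSeries.coeff γ f ≠ 0 →
      0 ≤ brk γ ∨ ∃ m : N2, γ = Finsupp.single (Sum.inr m) 1}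

/-! ### topology and the realization property -/

instance : TopologicalSpace PS := inferInstanceAs (TopologicalSpace ((Idx →₀ ℕ) → ℝ))

/-- `Γ` realizes the family `(π^(𝐧))_{𝐧∈ℕ²}`. -/
def Realizes (Γ : PS →ₐ[ℝ] PS) (π : ℕ × ℕ → PS) : Prop :=
  Continuous Γ ∧
    (∀ m : N2, Γ (MvPowerSeries.X (Sum.inr m)) = MvPowerSeries.X (Sum.inr m) + π m.1) ∧
    (∀ k : ℕ, HasSum
      (fun l : ℕ => ((k + l).choose k : ℝ) • (π (0, 0) ^ l * MvPowerSeries.X (Sum.inl (k + l))))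
      (Γ (MvPowerSeries.X (Sum.inl k))))

end

/-!
The shifted homogeneity `|γ| - α` is additive in `γ`: it is the weight of `γ` when `z_k` gets
weight `αk` and `z_𝐧` gets weight `|𝐧| - α`. Each operator `D` is homogeneous of a fixed degree `c`
for this grading: every monomial `z^β` of `D z^γ` has `|β| = |γ| + c`, with `c = w₁` for `∂₁`
(both `z_k ↦ z_{(1,0)} z_{k+1}` and `z_𝐧 ↦ z_{𝐧+(1,0)}` raise the weight by `w₁`), `c = w₂` for
`∂₂`, and `c = |γ̄| - |𝐧|` for `z^γ̄ D^(𝐧)`. All these `c` are positive.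
-/

open Finsupp

namespace MvPolynomial

variable {σ R M : Type*} [CommSemiring R] [AddCommGroup M] (w : σ → M)

theorem isWeightedHomogeneous_smul_monomial_sub_single_add
    {γ : σ →₀ ℕ} {i : σ} (hi : γ i ≠ 0) (δ : σ →₀ ℕ) (c : R) {m : M}
    (hm : weight w γ - w i + weight w δ = m) :
    IsWeightedHomogeneous w (c • monomial (γ - single i 1 + δ) (1 : R)) m := by
  rw [smul_monomial]
  refine isWeightedHomogeneous_monomial _ _ _ ?_
  rw [map_add, ← hm, ← weight_sub_single_add hi, add_sub_cancel_right]

end MvPolynomial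

section Homogeneity

variable (α w₁ w₂ : ℝ)

def varWeight : Idx → ℝ
  | .inl k => α * k
  | .inr m => wt w₁ w₂ m.1 - α

theorem homdeg_eq_add_weight (γ : MIdx) :
    homdeg α w₁ w₂ γ = α + weight (varWeight α w₁ w₂) γ := by
  unfold homdeg brk wsum
  rw [weight_apply, Int.cast_finsupp_sum, mul_add, mul_one, Finsupp.mul_sum, add_right_comm,
    ← Finsupp.sum_add, add_comm]
  congr 1
  refine Finsupp.sum_congr fun i _ => ?_
  cases i <;> simp [varWeight] <;> ring

theorem isWeightedHomogeneous_D0mono (γ : MIdx) :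
    IsWeightedHomogeneous (varWeight α w₁ w₂) (D0mono γ) (weight (varWeight α w₁ w₂) γ + α) := by
  refine IsWeightedHomogeneous.sum _ _ _ fun i hi => ?_
  rcases i with k | m
  · refine isWeightedHomogeneous_smul_monomial_sub_single_add _ (mem_support_iff.mp hi) _ _ ?_
    simp only [weight_single, varWeight, one_smul]
    push_cast
    ring
  · exact isWeightedHomogeneous_zero _ _ _

theorem isWeightedHomogeneous_DNmono (m : N2) (γ : MIdx) :
    IsWeightedHomogeneous (varWeight α w₁ w₂) (DNmono m γ)
      (weight (varWeight α w₁ w₂) γ + (α - wt w₁ w₂ m.1)) := by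
  unfold DNmono
  by_cases hm : γ (Sum.inr m) = 0
  · simp only [hm, Nat.cast_zero, zero_smul]
    exact isWeightedHomogeneous_zero _ _ _
  · rw [smul_monomial]
    refine isWeightedHomogeneous_monomial _ _ _ ?_
    rw [← weight_sub_single_add hm, varWeight]
    ring

theorem isWeightedHomogeneous_Dmono (n : ℕ × ℕ) (γ : MIdx) :
    IsWeightedHomogeneous (varWeight α w₁ w₂) (Dmono n γ)
      (weight (varWeight α w₁ w₂) γ + (α - wt w₁ w₂ n)) := by
  unfold Dmono
  split_ifs with hn
  · subst hn
    simpa [wt] using isWeightedHomogeneous_D0mono α w₁ w₂ γ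
  · exact isWeightedHomogeneous_DNmono α w₁ w₂ ⟨n, hn⟩ γ

theorem isWeightedHomogeneous_monomial_mul_Dmono (γbar : MIdx) (n : ℕ × ℕ) (γ : MIdx) :
    IsWeightedHomogeneous (varWeight α w₁ w₂) (monomial γbar 1 * Dmono n γ)
      (weight (varWeight α w₁ w₂) γ + (homdeg α w₁ w₂ γbar - wt w₁ w₂ n)) := by
  convert (isWeightedHomogeneous_monomial _ γbar 1 rfl).mul
    (isWeightedHomogeneous_Dmono α w₁ w₂ n γ) using 1
  rw [homdeg_eq_add_weight]
  ring

theorem isWeightedHomogeneous_d1mono (γ : MIdx) :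
    IsWeightedHomogeneous (varWeight α w₁ w₂) (d1mono γ) (weight (varWeight α w₁ w₂) γ + w₁) := by
  refine .add ?_ (IsWeightedHomogeneous.sum _ _ _ fun i hi => ?_)
  · convert (isWeightedHomogeneous_X ℝ _ (Sum.inr v10)).mul
      (isWeightedHomogeneous_D0mono α w₁ w₂ γ) using 1
    simp only [varWeight, v10, wt]
    push_cast
    ring
  · rcases i with k | m
    · exact isWeightedHomogeneous_zero _ _ _
    · refine isWeightedHomogeneous_smul_monomial_sub_single_add _ (mem_support_iff.mp hi) _ _ ?_
      simp only [weight_single, varWeight, wt, one_smul, Prod.fst_add, Prod.snd_add]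
      push_cast
      ring

theorem isWeightedHomogeneous_d2mono (γ : MIdx) :
    IsWeightedHomogeneous (varWeight α w₁ w₂) (d2mono γ) (weight (varWeight α w₁ w₂) γ + w₂) := by
  refine .add ?_ (IsWeightedHomogeneous.sum _ _ _ fun i hi => ?_)
  · convert (isWeightedHomogeneous_X ℝ _ (Sum.inr v01)).mul
      (isWeightedHomogeneous_D0mono α w₁ w₂ γ) using 1
    simp only [varWeight, v01, wt]
    push_cast
    ring
  · rcases i with k | m
    · exact isWeightedHomogeneous_zero _ _ _
    · refine isWeightedHomogeneous_smul_monomial_sub_single_add _ (mem_support_iff.mp hi) _ _ ?_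
      simp only [weight_single, varWeight, wt, one_smul, Prod.fst_add, Prod.snd_add]
      push_cast
      ring

theorem homdeg_lt_of_coeff_ne_zero {p : MvPolynomial Idx ℝ} {γ β : MIdx} {c : ℝ}
    (hp : IsWeightedHomogeneous (varWeight α w₁ w₂) p (weight (varWeight α w₁ w₂) γ + c))
    (hc : 0 < c) (hβ : coeff β p ≠ 0) : homdeg α w₁ w₂ γ < homdeg α w₁ w₂ β := by
  rw [homdeg_eq_add_weight, homdeg_eq_add_weight, hp hβ]
  linarith

end Homogeneity

theorem stmt1_general (α w₁ w₂ : ℝ) (hw₁ : 0 < w₁) (hw₂ : 0 < w₂) :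
    (∀ γ' β' : MIdx, MvPolynomial.coeff β' (d1mono γ') ≠ 0 →
        homdeg α w₁ w₂ γ' < homdeg α w₁ w₂ β') ∧
    (∀ γ' β' : MIdx, MvPolynomial.coeff β' (d2mono γ') ≠ 0 →
        homdeg α w₁ w₂ γ' < homdeg α w₁ w₂ β') ∧
    (∀ (γbar : MIdx) (n : ℕ × ℕ), 0 ≤ brk γbar → wt w₁ w₂ n < homdeg α w₁ w₂ γbar →
        ∀ γ' β' : MIdx,
          MvPolynomial.coeff β' (MvPolynomial.monomial γbar 1 * Dmono n γ') ≠ 0 →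
            homdeg α w₁ w₂ γ' < homdeg α w₁ w₂ β') :=
  ⟨fun γ' _ => homdeg_lt_of_coeff_ne_zero α w₁ w₂ (isWeightedHomogeneous_d1mono α w₁ w₂ γ') hw₁,
    fun γ' _ => homdeg_lt_of_coeff_ne_zero α w₁ w₂ (isWeightedHomogeneous_d2mono α w₁ w₂ γ') hw₂,
    fun γbar n _ hn γ' _ => homdeg_lt_of_coeff_ne_zero α w₁ w₂
      (isWeightedHomogeneous_monomial_mul_Dmono α w₁ w₂ γbar n γ') (sub_pos.mpr hn)⟩

/-- **Strict triangularity with respect to homogeneity.** -/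
theorem stmt1 (α w₁ w₂ : ℝ) (hα : 0 < α) (hw₁ : 0 < w₁) (hw₂ : 0 < w₂) :
    (∀ γ' β' : MIdx, MvPolynomial.coeff β' (d1mono γ') ≠ 0 →
        homdeg α w₁ w₂ γ' < homdeg α w₁ w₂ β') ∧
    (∀ γ' β' : MIdx, MvPolynomial.coeff β' (d2mono γ') ≠ 0 →
        homdeg α w₁ w₂ γ' < homdeg α w₁ w₂ β') ∧
    (∀ (γbar : MIdx) (n : ℕ × ℕ), 0 ≤ brk γbar → wt w₁ w₂ n < homdeg α w₁ w₂ γbar →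
        ∀ γ' β' : MIdx,
          MvPolynomial.coeff β' (MvPolynomial.monomial γbar 1 * Dmono n γ') ≠ 0 →
            homdeg α w₁ w₂ γ' < homdeg α w₁ w₂ β') :=
  stmt1_general α w₁ w₂ hw₁ hw₂
end

section
/- Compatibility with the polynomial sector. For every operator D in the family {z^γ·D^(𝐧) : [γ] ≥ 0, 𝐧 ∈ ℕ²} ∪ {∂₁, ∂₂}, every multi-index γ′ with [γ′] ≥ 0, and every 𝐦 ∈ ℕ²∖{0}: the z^{e_𝐦}-coefficient of D(z^{γ′}) vanishes. (Equivalently, the transposed operators preserve the polynomial sector spanned by the unit multi-indices {e_𝐦}_{𝐦≠0}.) -/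
open MvPolynomial

/-!
Every operator of the family sends a monomial of nonnegative bracket into the span of such
monomials: `z^γ·D^(𝐧)` adds `[γ] + 1` to the bracket (`D^(0)` trades `z_k` for `z_{k+1}`,
`∂_{z_𝐧}` removes a factor of bracket `-1`), and `∂ᵢ` preserves it, the factor `z_{(1,0)}` or
`z_{(0,1)}` compensating `D^(0)`. Since `[e_𝐦] = -1`, no `z_𝐦` can occur in that span.
-/

lemma brk_add (β β' : MIdx) : brk (β + β') = brk β + brk β' := by
  unfold brk
  apply Finsupp.sum_add_index
  · rintro (k | m) _ <;> simp
  · rintro (k | m) _ a b <;> (push_cast; ring)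

lemma brk_single_inl (k n : ℕ) : brk (Finsupp.single (Sum.inl k) n) = k * n := by
  simp [brk]

lemma brk_single_inr (m : N2) (n : ℕ) : brk (Finsupp.single (Sum.inr m) n) = -n := by
  simp [brk]

lemma brk_tsub_single {β : MIdx} {i : Idx} (hi : i ∈ β.support) :
    brk (β - Finsupp.single i 1) = brk β - brk (Finsupp.single i 1) := by
  have hle : Finsupp.single i 1 ≤ β :=
    Finsupp.single_le_iff.mpr (Nat.one_le_iff_ne_zero.mpr (Finsupp.mem_support_iff.mp hi))
  rw [eq_sub_iff_add_eq, ← brk_add, tsub_add_cancel_of_le hle]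

noncomputable abbrev brkNonneg : Submodule ℝ (MvPolynomial Idx ℝ) :=
  restrictSupport ℝ {β | 0 ≤ brk β}

lemma monomial_mem_brkNonneg {β : MIdx} (h : 0 ≤ brk β) (c : ℝ) :
    monomial β c ∈ brkNonneg :=
  (monomial_mem_restrictSupport ℝ).mpr (Or.inl h)

lemma coeff_single_inr_eq_zero_of_mem_brkNonneg {p : MvPolynomial Idx ℝ} (hp : p ∈ brkNonneg)
    (m : N2) : coeff (Finsupp.single (Sum.inr m) 1) p = 0 := by
  by_contra hne
  have : 0 ≤ brk (Finsupp.single (Sum.inr m) 1) := hp (mem_support_iff.mpr hne)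
  simp [brk_single_inr] at this

lemma monomial_mul_D0mono_mem_brkNonneg {γ γ' : MIdx} (h : -1 ≤ brk γ + brk γ') :
    monomial γ 1 * D0mono γ' ∈ brkNonneg := by
  rw [D0mono, Finsupp.sum, Finset.mul_sum]
  refine Submodule.sum_mem _ fun i hi => ?_
  rcases i with k | m
  · rw [mul_smul_comm, monomial_mul, one_mul]
    refine Submodule.smul_mem _ _ (monomial_mem_brkNonneg ?_ _)
    rw [brk_add, brk_add, brk_tsub_single hi, brk_single_inl, brk_single_inl]
    push_cast
    omega
  · simp

lemma monomial_mul_DNmono_mem_brkNonneg {γ γ' : MIdx} (m : N2) (h : -1 ≤ brk γ + brk γ') :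
    monomial γ 1 * DNmono m γ' ∈ brkNonneg := by
  rw [DNmono, mul_smul_comm, monomial_mul, one_mul]
  by_cases hm : Sum.inr m ∈ γ'.support
  · refine Submodule.smul_mem _ _ (monomial_mem_brkNonneg ?_ _)
    rw [brk_add, brk_tsub_single hm, brk_single_inr]
    omega
  · simp [Finsupp.notMem_support_iff.mp hm]

lemma monomial_mul_Dmono_mem_brkNonneg {γ γ' : MIdx} (n : ℕ × ℕ) (h : -1 ≤ brk γ + brk γ') :
    monomial γ 1 * Dmono n γ' ∈ brkNonneg := by
  unfold Dmono
  split
  · exact monomial_mul_D0mono_mem_brkNonneg h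
  · exact monomial_mul_DNmono_mem_brkNonneg _ h

lemma X_mul_D0mono_mem_brkNonneg {γ' : MIdx} (h : 0 ≤ brk γ') (m : N2) :
    X (Sum.inr m) * D0mono γ' ∈ brkNonneg := by
  refine monomial_mul_D0mono_mem_brkNonneg ?_
  rw [brk_single_inr]
  omega

lemma smul_monomial_replace_mem_brkNonneg {γ' : MIdx} (h : 0 ≤ brk γ') {m : N2}
    (hm : Sum.inr m ∈ γ'.support) (m' : N2) (c : ℝ) :
    c • monomial (γ' - Finsupp.single (Sum.inr m) 1 + Finsupp.single (Sum.inr m') 1) 1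
      ∈ brkNonneg := by
  refine Submodule.smul_mem _ _ (monomial_mem_brkNonneg ?_ _)
  rw [brk_add, brk_tsub_single hm, brk_single_inr, brk_single_inr]
  omega

lemma d1mono_mem_brkNonneg {γ' : MIdx} (h : 0 ≤ brk γ') : d1mono γ' ∈ brkNonneg := by
  refine add_mem (X_mul_D0mono_mem_brkNonneg h _) (Submodule.sum_mem _ fun i hi => ?_)
  rcases i with k | m
  · exact zero_mem _
  · exact smul_monomial_replace_mem_brkNonneg h hi _ _

lemma d2mono_mem_brkNonneg {γ' : MIdx} (h : 0 ≤ brk γ') : d2mono γ' ∈ brkNonneg := by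
  refine add_mem (X_mul_D0mono_mem_brkNonneg h _) (Submodule.sum_mem _ fun i hi => ?_)
  rcases i with k | m
  · exact zero_mem _
  · exact smul_monomial_replace_mem_brkNonneg h hi _ _

/-- **Compatibility with the polynomial sector.** -/
theorem stmt8 :
    (∀ (γ : MIdx) (n : ℕ × ℕ), 0 ≤ brk γ → ∀ γ' : MIdx, 0 ≤ brk γ' → ∀ m : N2,
        MvPolynomial.coeff (Finsupp.single (Sum.inr m) 1)
          (MvPolynomial.monomial γ 1 * Dmono n γ') = 0) ∧
    (∀ γ' : MIdx, 0 ≤ brk γ' → ∀ m : N2,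
        MvPolynomial.coeff (Finsupp.single (Sum.inr m) 1) (d1mono γ') = 0) ∧
    (∀ γ' : MIdx, 0 ≤ brk γ' → ∀ m : N2,
        MvPolynomial.coeff (Finsupp.single (Sum.inr m) 1) (d2mono γ') = 0) :=
  ⟨fun _ n h _ h' => coeff_single_inr_eq_zero_of_mem_brkNonneg
      (monomial_mul_Dmono_mem_brkNonneg n (by omega)),
    fun _ h' => coeff_single_inr_eq_zero_of_mem_brkNonneg (d1mono_mem_brkNonneg h'),
    fun _ h' => coeff_single_inr_eq_zero_of_mem_brkNonneg (d2mono_mem_brkNonneg h')⟩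
end

section
/- Faà di Bruno-type identity for the shift generators (formula (fw21)). For every l ∈ ℕ and every 𝐦 = (m₁,m₂) ∈ ℕ², the following identity holds in ℝ[z_k,z_𝐧]: (1/(m₁!·m₂!))·∂₁^{m₁}∂₂^{m₂}(l!·z_l) = Σ_{k≥0} ((l+k)!/k!)·z_{k+l}·( Σ z_{𝐧₁}···z_{𝐧ₖ} ), where the inner sum runs over all ordered k-tuples (𝐧₁,…,𝐧ₖ) of elements of ℕ²∖{0} with 𝐧₁+⋯+𝐧ₖ = 𝐦 (for k = 0 the inner sum is 1 if 𝐦 = 0 and 0 otherwise); only the terms with k ≤ m₁+m₂ are nonzero, so the outer sum is finite. -/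
open MvPolynomial

/-- `∂₁` on polynomials. -/
noncomputable def d1poly (p : MvPolynomial Idx ℝ) : MvPolynomial Idx ℝ :=
  ∑ γ ∈ p.support, MvPolynomial.coeff γ p • d1mono γ

/-- `∂₂` on polynomials. -/
noncomputable def d2poly (p : MvPolynomial Idx ℝ) : MvPolynomial Idx ℝ :=
  ∑ γ ∈ p.support, MvPolynomial.coeff γ p • d2mono γ

/-!
`∂₁` and `∂₂` are derivations, so it suffices to know them on generators. Put
`T_k(𝐦) = Σ z_{𝐧₁}⋯z_{𝐧ₖ}` (the inner sum) and `F(𝐦) = Σ_k (l+k)!/k! z_{k+l} T_k(𝐦)`. For a unit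
vector `e` with coordinate `π`, a part of a composition of `𝐦 + e` with positive `π`-component
either equals `e` (delete it) or exceeds `e` (lower it by `e`); this gives
`(π 𝐦 + 1) T_{k+1}(𝐦 + e) = (k+1) z_e T_k(𝐦) + ∂_e T_{k+1}(𝐦)`. Together with
`∂_e z_{k+l} = (k+l+1) z_e z_{k+l+1}` it yields `∂_e F(𝐦) = (π 𝐦 + 1) F(𝐦 + e)`, and iterating from
`F(0) = l! z_l` gives `∂₁^{m₁} ∂₂^{m₂} (l! z_l) = m₁! m₂! F(𝐦)`.
-/

open Finset

theorem Derivation.leibniz_prod {R A M : Type*} [CommSemiring R] [CommSemiring A]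
    [Algebra R A] [AddCommMonoid M] [Module A M] [Module R M] (D : Derivation R A M)
    {ι : Type*} [DecidableEq ι] (s : Finset ι) (f : ι → A) :
    D (∏ i ∈ s, f i) = ∑ i ∈ s, (∏ j ∈ s.erase i, f j) • D (f i) := by
  induction s using Finset.induction_on with
  | empty => simp
  | insert a s ha ih =>
    rw [prod_insert ha, D.leibniz, ih, sum_insert ha, erase_insert ha, smul_sum, add_comm]
    congr 1
    refine sum_congr rfl fun i hi => ?_
    rw [erase_insert_of_ne (ne_of_mem_of_not_mem hi ha).symm,
      prod_insert fun h => ha (mem_of_mem_erase h), mul_smul]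

theorem MvPolynomial.sum_coeff_smul_map_monomial_one {σ R M : Type*} [CommSemiring R]
    [AddCommMonoid M] [Module R M] (L : MvPolynomial σ R →ₗ[R] M) (p : MvPolynomial σ R) :
    ∑ γ ∈ p.support, coeff γ p • L (monomial γ 1) = L p := by
  conv_rhs => rw [p.as_sum, map_sum]
  refine sum_congr rfl fun γ _ => ?_
  rw [← map_smul, smul_monomial, smul_eq_mul, mul_one]

def N2.shift (n : N2) (e : ℕ × ℕ) : N2 :=
  ⟨n.1 + e, fun h => n.2 (add_eq_zero.mp h).1⟩

-- `π` is meant to be the coordinate along the unit vector `e`.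
noncomputable def shiftDerivation (π : ℕ × ℕ →+ ℕ) (e : N2) :
    Derivation ℝ (MvPolynomial Idx ℝ) (MvPolynomial Idx ℝ) :=
  mkDerivation ℝ <| Sum.elim
    (fun k => ((k + 1 : ℕ) : ℝ) • (X (Sum.inr e) * X (Sum.inl (k + 1))))
    (fun n => ((π n.1 + 1 : ℕ) : ℝ) • X (Sum.inr (n.shift e.1)))

@[simp]
theorem shiftDerivation_X_inl (π : ℕ × ℕ →+ ℕ) (e : N2) (k : ℕ) :
    shiftDerivation π e (X (Sum.inl k)) =
      ((k + 1 : ℕ) : ℝ) • (X (Sum.inr e) * X (Sum.inl (k + 1))) :=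
  mkDerivation_X _ _ _

@[simp]
theorem shiftDerivation_X_inr (π : ℕ × ℕ →+ ℕ) (e : N2) (n : N2) :
    shiftDerivation π e (X (Sum.inr n)) = ((π n.1 + 1 : ℕ) : ℝ) • X (Sum.inr (n.shift e.1)) :=
  mkDerivation_X _ _ _

theorem shiftDerivation_monomial_one (π : ℕ × ℕ →+ ℕ) (e : N2) (γ : MIdx) :
    shiftDerivation π e (monomial γ 1) =
      X (Sum.inr e) * D0mono γ +
        γ.sum fun i n =>
          match i with
          | Sum.inl _ => 0
          | Sum.inr m =>
              (((π m.1 + 1) * n : ℕ) : ℝ) •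
                (monomial (γ - Finsupp.single (Sum.inr m) 1 +
                  Finsupp.single (Sum.inr (m.shift e.1)) 1) 1 : MvPolynomial Idx ℝ) := by
  rw [shiftDerivation, mkDerivation_monomial, one_smul, D0mono, Finsupp.mul_sum,
    ← Finsupp.sum_add]
  refine Finsupp.sum_congr fun i _ => ?_
  rcases i with k | m
  · simp only [X, Sum.elim_inl, smul_monomial, monomial_mul, smul_eq_mul, add_zero, mul_one,
      one_mul]
    exact congrArg₂ (fun a c => monomial a c) (add_left_comm _ _ _) (by push_cast; ring)
  · simp only [X, Sum.elim_inr, smul_monomial, monomial_mul, smul_eq_mul, mul_zero, zero_add,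
      mul_one]
    exact congrArg (monomial _) (by push_cast; ring)

theorem d1poly_eq_shiftDerivation :
    d1poly = shiftDerivation (AddMonoidHom.fst ℕ ℕ) v10 := by
  funext p
  refine (sum_coeff_smul_map_monomial_one (shiftDerivation _ v10).toLinearMap p).symm ▸ ?_
  refine sum_congr rfl fun γ _ => ?_
  rw [Derivation.coeFn_coe, shiftDerivation_monomial_one]
  rfl

theorem d2poly_eq_shiftDerivation :
    d2poly = shiftDerivation (AddMonoidHom.snd ℕ ℕ) v01 := by
  funext p
  refine (sum_coeff_smul_map_monomial_one (shiftDerivation _ v01).toLinearMap p).symm ▸ ?_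
  refine sum_congr rfl fun γ _ => ?_
  rw [Derivation.coeFn_coe, shiftDerivation_monomial_one]
  rfl

theorem finite_setOf_sum_val_eq (k : ℕ) (m : ℕ × ℕ) :
    {t : Fin k → N2 | ∑ j, (t j).1 = m}.Finite := by
  refine (Set.Finite.pi' fun _ => (Set.finite_Iic m).preimage Subtype.val_injective.injOn).subset ?_
  intro t (ht : ∑ j, (t j).1 = m) j
  rw [Set.mem_preimage, Set.mem_Iic, ← ht]
  exact single_le_sum (f := fun i => (t i).1) (fun i _ => zero_le) (mem_univ j)

noncomputable def compositions (k : ℕ) (m : ℕ × ℕ) : Finset (Fin k → N2) :=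
  (finite_setOf_sum_val_eq k m).toFinset

@[simp]
theorem mem_compositions {k : ℕ} {m : ℕ × ℕ} {t : Fin k → N2} :
    t ∈ compositions k m ↔ ∑ j, (t j).1 = m := by
  simp [compositions]

theorem compositions_eq_empty_of_lt {k : ℕ} {m : ℕ × ℕ} (h : m.1 + m.2 < k) :
    compositions k m = ∅ := by
  refine eq_empty_of_forall_notMem fun t ht => h.not_ge ?_
  rw [mem_compositions] at ht
  calc k = ∑ _j : Fin k, 1 := by simp
    _ ≤ ∑ j, ((t j).1.1 + (t j).1.2) := sum_le_sum fun j _ => by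
        have := (t j).2; contrapose! this; ext <;> simp <;> omega
    _ = m.1 + m.2 := by rw [sum_add_distrib, ← Prod.fst_sum, ← Prod.snd_sum, ht]

theorem compositions_zero_left (m : ℕ × ℕ) :
    compositions 0 m = if m = 0 then {Fin.elim0} else ∅ := by
  ext t
  split_ifs <;> simp [eq_comm, Subsingleton.elim t Fin.elim0, *]

theorem sum_val_update_add {k : ℕ} (s : Fin k → N2) (j : Fin k) (b : N2) :
    ∑ i, (Function.update s j b i).1 + (s j).1 = ∑ i, (s i).1 + b.1 := by
  rw [← add_sum_erase _ _ (mem_univ j), ← add_sum_erase _ _ (mem_univ j), Function.update_self,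
    sum_congr rfl fun i hi => by rw [Function.update_of_ne (ne_of_mem_erase hi)]]
  abel

theorem sum_compositions_succ_filter_eq {M : Type*} [AddCommMonoid M] (k : ℕ) (m : ℕ × ℕ)
    (e : N2) (f : (Fin (k + 1) → N2) → Fin (k + 1) → M) :
    ∑ t ∈ compositions (k + 1) (m + e.1), ∑ j with t j = e, f t j =
      ∑ s ∈ compositions k m, ∑ j, f (j.insertNth e s) j := by
  symm
  rw [sum_sigma', sum_sigma']
  refine sum_bij' (fun x _ => ⟨x.2.insertNth e x.1, x.2⟩) (fun x _ => ⟨x.2.removeNth x.1, x.2⟩)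
    ?_ ?_ ?_ ?_ fun _ _ => rfl
  · rintro ⟨s, j⟩ hs
    simp only [mem_sigma, mem_compositions, mem_univ, and_true, mem_filter,
      Fin.insertNth_apply_same] at hs ⊢
    rw [Fin.sum_univ_succAbove _ j]
    simp [hs, add_comm]
  · rintro ⟨t, j⟩ ht
    simp only [mem_sigma, mem_compositions, mem_univ, and_true, true_and, mem_filter] at ht ⊢
    rw [Fin.sum_univ_succAbove _ j, ht.2, add_comm] at ht
    exact add_right_cancel ht.1
  · rintro ⟨s, j⟩ _
    simp
  · rintro ⟨t, j⟩ ht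
    simp only [mem_sigma, mem_filter] at ht
    simp [← ht.2.2]

open scoped Classical in
theorem sum_compositions_filter_lt {M : Type*} [AddCommMonoid M] (k : ℕ) (m e : ℕ × ℕ)
    (f : (Fin k → N2) → Fin k → M) :
    ∑ t ∈ compositions k (m + e), ∑ j with e < (t j).1, f t j =
      ∑ s ∈ compositions k m, ∑ j, f (Function.update s j ((s j).shift e)) j := by
  symm
  rw [sum_sigma', sum_sigma']
  refine sum_bij' (fun x _ => ⟨Function.update x.1 x.2 ((x.1 x.2).shift e), x.2⟩)
    (fun x hx => ⟨Function.update x.1 x.2 ⟨(x.1 x.2).1 - e, fun h => ?_⟩, x.2⟩)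
    ?_ ?_ ?_ ?_ fun _ _ => rfl
  · simp only [mem_sigma, mem_filter] at hx
    exact hx.2.2.not_ge (tsub_eq_zero_iff_le.mp h)
  · rintro ⟨s, j⟩ hs
    simp only [mem_sigma, mem_compositions, mem_univ, and_true, true_and, mem_filter,
      Function.update_self] at hs ⊢
    refine ⟨add_right_cancel (b := (s j).1) ?_, lt_of_le_of_ne le_add_self fun h => (s j).2 ?_⟩
    · rw [sum_val_update_add, hs, N2.shift, add_assoc, add_comm e]
    · exact add_eq_right.mp h.symm
  · rintro ⟨t, j⟩ ht
    simp only [mem_sigma, mem_compositions, mem_univ, and_true, true_and, mem_filter] at ht ⊢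
    refine add_right_cancel (b := (t j).1) ?_
    rw [sum_val_update_add, ht.1, add_assoc, add_tsub_cancel_of_le ht.2.le]
  · rintro ⟨s, j⟩ _
    simp [N2.shift]
  · rintro ⟨t, j⟩ ht
    simp only [mem_sigma, mem_filter] at ht
    simp [N2.shift, tsub_add_cancel_of_le ht.2.2.le]

noncomputable def compositionPoly (k : ℕ) (m : ℕ × ℕ) : MvPolynomial Idx ℝ :=
  ∑ t ∈ compositions k m, ∏ j, X (Sum.inr (t j))

theorem compositionPoly_eq_finsum (k : ℕ) (m : ℕ × ℕ) :
    ∑ᶠ t ∈ {t : Fin k → N2 | ∑ j, (t j).1 = m}, ∏ j, (X (Sum.inr (t j)) : MvPolynomial Idx ℝ) =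
      compositionPoly k m :=
  finsum_mem_eq_finite_toFinset_sum _ (finite_setOf_sum_val_eq k m)

theorem compositionPoly_eq_zero_of_lt {k : ℕ} {m : ℕ × ℕ} (h : m.1 + m.2 < k) :
    compositionPoly k m = 0 := by
  rw [compositionPoly, compositions_eq_empty_of_lt h, sum_empty]

theorem compositionPoly_zero_left (m : ℕ × ℕ) :
    compositionPoly 0 m = if m = 0 then 1 else 0 := by
  rw [compositionPoly, compositions_zero_left]
  split_ifs <;> simp

theorem prod_X_update {k : ℕ} (s : Fin k → N2) (j : Fin k) (b : N2) :
    ∏ i, (X (Sum.inr (Function.update s j b i)) : MvPolynomial Idx ℝ) =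
      X (Sum.inr b) * ∏ i ∈ univ.erase j, X (Sum.inr (s i)) := by
  rw [← mul_prod_erase _ _ (mem_univ j), Function.update_self,
    prod_congr rfl fun i hi => by rw [Function.update_of_ne (ne_of_mem_erase hi)]]

theorem prod_X_insertNth {k : ℕ} (s : Fin k → N2) (j : Fin (k + 1)) (b : N2) :
    ∏ i, (X (Sum.inr ((j.insertNth b s : Fin (k + 1) → N2) i)) : MvPolynomial Idx ℝ) =
      X (Sum.inr b) * ∏ i, X (Sum.inr (s i)) := by
  rw [Fin.prod_univ_succAbove _ j]
  simp

theorem shiftDerivation_compositionPoly (π : ℕ × ℕ →+ ℕ) (e : N2) (k : ℕ) (m : ℕ × ℕ) :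
    shiftDerivation π e (compositionPoly k m) =
      ∑ s ∈ compositions k m, ∑ j, ((π (s j).1 + 1 : ℕ) : ℝ) •
        (X (Sum.inr ((s j).shift e.1)) * ∏ i ∈ univ.erase j, X (Sum.inr (s i))) := by
  simp only [compositionPoly, map_sum, Derivation.leibniz_prod, shiftDerivation_X_inr,
    smul_eq_mul, smul_mul_assoc, mul_comm]

noncomputable def faaDiBrunoTerm (l : ℕ) (m : ℕ × ℕ) (k : ℕ) : MvPolynomial Idx ℝ :=
  (((l + k).factorial : ℝ) / (k.factorial : ℝ)) • (X (Sum.inl (k + l)) * compositionPoly k m)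

noncomputable def faaDiBrunoSum (l : ℕ) (m : ℕ × ℕ) : MvPolynomial Idx ℝ :=
  ∑ᶠ k, faaDiBrunoTerm l m k

theorem faaDiBrunoSum_eq_sum_range (l : ℕ) {m : ℕ × ℕ} {N : ℕ} (hN : m.1 + m.2 < N) :
    faaDiBrunoSum l m = ∑ k ∈ range N, faaDiBrunoTerm l m k := by
  refine finsum_eq_sum_of_support_subset _ fun k hk => ?_
  by_contra hkN
  refine hk ?_
  rw [faaDiBrunoTerm, compositionPoly_eq_zero_of_lt (by simp at hkN; omega), mul_zero, smul_zero]

theorem faaDiBrunoSum_zero_right (l : ℕ) :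
    faaDiBrunoSum l 0 = (l.factorial : ℝ) • X (Sum.inl l) := by
  rw [faaDiBrunoSum_eq_sum_range l (N := 1) (by simp), sum_range_one, faaDiBrunoTerm,
    compositionPoly_zero_left, if_pos rfl]
  simp

theorem add_factorial_div_factorial_succ_mul (l k : ℕ) :
    ((l + k + 1).factorial : ℝ) / (k + 1).factorial * (k + 1 : ℕ) =
      (l + k).factorial / k.factorial * (k + l + 1 : ℕ) := by
  rw [Nat.factorial_succ (l + k), Nat.factorial_succ k]
  push_cast
  field_simp
  ring

section shiftDerivation

variable {π : ℕ × ℕ →+ ℕ} {e : N2}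

open scoped Classical in
theorem smul_compositionPoly_succ_add (hπe : π e.1 = 1) (hπ : ∀ n, ¬e.1 ≤ n → π n = 0)
    (k : ℕ) (m : ℕ × ℕ) :
    ((π m + 1 : ℕ) : ℝ) • compositionPoly (k + 1) (m + e.1) =
      ((k + 1 : ℕ) : ℝ) • (X (Sum.inr e) * compositionPoly k m) +
        shiftDerivation π e (compositionPoly (k + 1) m) := by
  have hsplit : ∀ n : N2,
      π n.1 = (if n = e then π n.1 else 0) + (if e.1 < n.1 then π n.1 else 0) := by
    intro n
    by_cases h₁ : n = e
    · simp [h₁]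
    by_cases h₂ : e.1 < n.1
    · simp [h₁, h₂]
    · rw [hπ _ fun h => h₂ (lt_of_le_of_ne h fun h' => h₁ (Subtype.ext h'.symm))]
      simp
  have hweight : ∀ t ∈ compositions (k + 1) (m + e.1),
      ((π m + 1 : ℕ) : ℝ) • ∏ j, (X (Sum.inr (t j)) : MvPolynomial Idx ℝ) =
        ∑ j with t j = e, (π (t j).1 : ℝ) • ∏ i, X (Sum.inr (t i)) +
          ∑ j with e.1 < (t j).1, (π (t j).1 : ℝ) • ∏ i, X (Sum.inr (t i)) := by
    intro t ht
    have hsum : π m + 1 = ∑ j, π (t j).1 := by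
      rw [← map_sum, mem_compositions.mp ht, map_add, hπe]
    rw [hsum, sum_filter, sum_filter, ← sum_add_distrib, Nat.cast_sum, sum_smul]
    refine sum_congr rfl fun j _ => ?_
    conv_lhs => rw [hsplit (t j)]
    split_ifs <;> simp only [Nat.cast_add, Nat.cast_zero, add_smul, zero_smul, add_zero, zero_add]
  rw [compositionPoly, smul_sum, sum_congr rfl hweight, sum_add_distrib,
    sum_compositions_succ_filter_eq, sum_compositions_filter_lt,
    shiftDerivation_compositionPoly, compositionPoly, mul_sum, smul_sum]
  congr 1
  · refine sum_congr rfl fun s _ => ?_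
    simp only [Fin.insertNth_apply_same, hπe, Nat.cast_one, one_smul, prod_X_insertNth,
      sum_const, card_univ, Fintype.card_fin, Nat.cast_smul_eq_nsmul]
  · refine sum_congr rfl fun s _ => sum_congr rfl fun j _ => ?_
    rw [prod_X_update, Function.update_self, N2.shift, map_add, hπe]

theorem shiftDerivation_faaDiBrunoSum (hπe : π e.1 = 1) (hπ : ∀ n, ¬e.1 ≤ n → π n = 0)
    (l : ℕ) (m : ℕ × ℕ) :
    shiftDerivation π e (faaDiBrunoSum l m) =
      ((π m + 1 : ℕ) : ℝ) • faaDiBrunoSum l (m + e.1) := by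
  set D := shiftDerivation π e
  set c : ℕ → ℝ := fun k => ((l + k).factorial : ℝ) / k.factorial
  set a : ℕ → MvPolynomial Idx ℝ := fun k =>
    c k • (X (Sum.inl (k + l)) * D (compositionPoly k m))
  set b : ℕ → MvPolynomial Idx ℝ := fun k =>
    (c k * (k + l + 1 : ℕ)) • (X (Sum.inr e) * X (Sum.inl (k + l + 1)) * compositionPoly k m)
  set N := (m + e.1).1 + (m + e.1).2 + 1
  have hD : ∀ k, D (faaDiBrunoTerm l m k) = a k + b k := by
    intro k
    rw [faaDiBrunoTerm, D.map_smul, D.leibniz, shiftDerivation_X_inl]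
    simp only [a, b, c, smul_eq_C_mul, map_mul]
    ring
  have hg : ∀ k, ((π m + 1 : ℕ) : ℝ) • faaDiBrunoTerm l (m + e.1) (k + 1) = b k + a (k + 1) := by
    intro k
    have hstar := smul_compositionPoly_succ_add hπe hπ k m
    have hc := congrArg (C (σ := Idx)) (add_factorial_div_factorial_succ_mul l k)
    simp only [faaDiBrunoTerm, a, b, c, smul_eq_C_mul, map_mul] at hstar hc ⊢
    rw [show k + 1 + l = k + l + 1 by ring]
    linear_combination (C (c (k + 1)) * X (Sum.inl (k + l + 1))) * hstar
      + (X (Sum.inr e) * X (Sum.inl (k + l + 1)) * compositionPoly k m) * hc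
  have hg0 : faaDiBrunoTerm l (m + e.1) 0 = 0 := by
    rw [faaDiBrunoTerm, compositionPoly_zero_left, if_neg fun h => e.2 (add_eq_zero.mp h).2]
    simp
  have ha0 : a 0 = 0 := by
    simp only [a, compositionPoly_zero_left]
    split_ifs <;> simp
  have haN : a N = 0 := by
    simp only [a, compositionPoly_eq_zero_of_lt (show m.1 + m.2 < N by simp [N]; omega)]
    simp
  -- `a` enters the two sides with indices shifted by one, which is harmless as `a 0 = a N = 0`.
  have hshift : ∑ k ∈ range N, a (k + 1) = ∑ k ∈ range N, a k := by
    rw [← add_zero (∑ k ∈ range N, a (k + 1)), ← ha0, ← sum_range_succ', sum_range_succ, haN,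
      add_zero]
  rw [faaDiBrunoSum_eq_sum_range l (N := N) (by simp [N]; omega),
    faaDiBrunoSum_eq_sum_range l (N := N + 1) (by omega), map_sum, smul_sum, sum_range_succ' _ N,
    hg0, smul_zero, add_zero, sum_congr rfl fun k _ => hD k, sum_congr rfl fun k _ => hg k,
    sum_add_distrib, sum_add_distrib, hshift, add_comm]

theorem iterate_shiftDerivation_smul_faaDiBrunoSum (hπe : π e.1 = 1)
    (hπ : ∀ n, ¬e.1 ≤ n → π n = 0) (l : ℕ) {m : ℕ × ℕ} (hm : π m = 0) (c : ℝ) (n : ℕ) :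
    (shiftDerivation π e)^[n] (c • faaDiBrunoSum l m) =
      (c * n.factorial) • faaDiBrunoSum l (m + n • e.1) := by
  induction n with
  | zero => simp
  | succ n ih =>
    have hπn : π (m + n • e.1) = n := by
      rw [map_add, map_nsmul, hm, hπe, smul_eq_mul, mul_one, zero_add]
    rw [Function.iterate_succ_apply', ih, Derivation.map_smul,
      shiftDerivation_faaDiBrunoSum hπe hπ, hπn, smul_smul, add_assoc, ← succ_nsmul,
      Nat.factorial_succ]
    congr 1
    push_cast
    ring

end shiftDerivation

/-- **Faà di Bruno-type identity for the shift generators** (formula (fw21)). -/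
theorem stmt11 (l : ℕ) (m : ℕ × ℕ) :
    (1 / ((m.1.factorial * m.2.factorial : ℕ) : ℝ)) •
        d1poly^[m.1] (d2poly^[m.2]
          ((l.factorial : ℝ) • (MvPolynomial.X (Sum.inl l) : MvPolynomial Idx ℝ)))
      = ∑ᶠ k : ℕ, (((l + k).factorial : ℝ) / (k.factorial : ℝ)) •
          ((MvPolynomial.X (Sum.inl (k + l)) : MvPolynomial Idx ℝ) *
            ∑ᶠ t ∈ {t : Fin k → N2 | (∑ j, (t j).1) = m},
              ∏ j, (MvPolynomial.X (Sum.inr (t j)) : MvPolynomial Idx ℝ)) := by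
  have hfst : ∀ n : ℕ × ℕ, ¬v10.1 ≤ n → AddMonoidHom.fst ℕ ℕ n = 0 := fun n h => by
    simp [v10, Prod.le_def] at h ⊢
    omega
  have hsnd : ∀ n : ℕ × ℕ, ¬v01.1 ≤ n → AddMonoidHom.snd ℕ ℕ n = 0 := fun n h => by
    simp [v01, Prod.le_def] at h ⊢
    omega
  have hm : (0 : ℕ × ℕ) + m.2 • v01.1 + m.1 • v10.1 = m := by
    ext <;> simp [v01, v10]
  rw [d1poly_eq_shiftDerivation, d2poly_eq_shiftDerivation, ← faaDiBrunoSum_zero_right,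
    ← one_smul ℝ (faaDiBrunoSum l 0),
    iterate_shiftDerivation_smul_faaDiBrunoSum rfl hsnd l (map_zero _),
    iterate_shiftDerivation_smul_faaDiBrunoSum rfl hfst l (by simp [v01]), smul_smul, hm,
    one_mul, Nat.cast_mul, mul_comm (m.2.factorial : ℝ), one_div,
    inv_mul_cancel₀ (by positivity), one_smul]
  simp_rw [compositionPoly_eq_finsum]
  rfl
end
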